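/- arXiv:math/0509382 — 3 statements merged into one kernel-verified Lean document; each statement's English description precedes it below -/
import Mathlib

section
/- For natural numbers n, k with 2k ≤ n, one has C(n-k,k)/C(n,k) ≤ exp(-k²/n), equivalently 2·exp(k²/n) ≤ 2·C(n,k)/C(n-k,k). -/
/-- For `2k ≤ n`, `n ≥ 1`: `C(n-k,k)/C(n,k) ≤ exp (-k²/n)`, equivalently
`2·exp(k²/n) ≤ 2·C(n,k)/C(n-k,k)`. -/
theorem choose_ratio_le_exp (n k : ℕ) (h : 2 * k ≤ n) (hn : 1 ≤ n) :
    ((n - k).choose k : ℝ) / (n.choose k : ℝ) ≤ Real.exp (-(k : ℝ) ^ 2 / n) ∧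
    2 * Real.exp ((k : ℝ) ^ 2 / n) ≤ 2 * (n.choose k : ℝ) / ((n - k).choose k : ℝ) := by
  have hkn : k ≤ n - k := by omega
  have hnR : (0:ℝ) < (n:ℝ) := by exact_mod_cast hn
  have hcn : (0:ℝ) < (n.choose k : ℝ) := by
    exact_mod_cast Nat.choose_pos (by omega)
  have hck : (0:ℝ) < ((n - k).choose k : ℝ) := by
    exact_mod_cast Nat.choose_pos hkn
  have hfac : (0:ℝ) < (Nat.factorial k : ℝ) := by exact_mod_cast k.factorial_pos
  have hd : ((n-k).choose k : ℝ) / (n.choose k : ℝ) =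
      ∏ i ∈ Finset.range k, (((n - k - i : ℕ) : ℝ) / ((n - i : ℕ) : ℝ)) := by
    rw [Finset.prod_div_distrib, ← Nat.cast_prod, ← Nat.cast_prod,
        ← Nat.descFactorial_eq_prod_range, ← Nat.descFactorial_eq_prod_range,
        Nat.descFactorial_eq_factorial_mul_choose, Nat.descFactorial_eq_factorial_mul_choose]
    push_cast
    rw [mul_div_mul_left _ _ (ne_of_gt hfac)]
  have hbound : ∀ i ∈ Finset.range k,
      (((n - k - i : ℕ) : ℝ) / ((n - i : ℕ) : ℝ)) ≤ Real.exp (-(k:ℝ)/n) := by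
    intro i hi
    simp only [Finset.mem_range] at hi
    have hni : (0:ℝ) < ((n - i : ℕ) : ℝ) := by
      have : 0 < n - i := by omega
      exact_mod_cast this
    have e1 : ((n - k - i : ℕ) : ℝ) = (n:ℝ) - k - i := by
      rw [Nat.sub_sub, Nat.cast_sub (by omega : k + i ≤ n)]
      push_cast; ring
    have e2 : ((n - i : ℕ) : ℝ) = (n:ℝ) - i := by
      rw [Nat.cast_sub (by omega : i ≤ n)]
    have h1 : (((n - k - i : ℕ) : ℝ) / ((n - i : ℕ) : ℝ)) ≤ 1 - (k:ℝ)/n := by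
      have hik : (i:ℝ) ≤ (k:ℝ) := by exact_mod_cast hi.le
      have hkn' : (k:ℝ) ≥ 0 := by positivity
      have hin : (i:ℝ) ≥ 0 := by positivity
      have heq : 1 - (k:ℝ)/n = ((n:ℝ) - k)/n := by field_simp
      have hni' : (0:ℝ) < (n:ℝ) - i := e2 ▸ hni
      rw [heq, e1, e2, div_le_div_iff₀ hni' hnR]
      nlinarith
    calc (((n - k - i : ℕ) : ℝ) / ((n - i : ℕ) : ℝ)) ≤ 1 - (k:ℝ)/n := h1
      _ ≤ Real.exp (-(k:ℝ)/n) := by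
          have := Real.add_one_le_exp (-(k:ℝ)/n)
          rw [neg_div] at this ⊢
          linarith
  have key : ((n - k).choose k : ℝ) / (n.choose k : ℝ) ≤ Real.exp (-(k : ℝ) ^ 2 / n) := by
    rw [hd]
    calc ∏ i ∈ Finset.range k, (((n - k - i : ℕ) : ℝ) / ((n - i : ℕ) : ℝ))
        ≤ ∏ i ∈ Finset.range k, Real.exp (-(k:ℝ)/n) := by
          apply Finset.prod_le_prod
          · intro i _; positivity
          · exact hbound
      _ = Real.exp (-(k : ℝ) ^ 2 / n) := by
          rw [Finset.prod_const, ← Real.exp_nat_mul]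
          congr 1
          rw [Finset.card_range]
          ring
  refine ⟨key, ?_⟩
  have hce : (0:ℝ) < Real.exp ((k : ℝ) ^ 2 / n) := Real.exp_pos _
  have hx : Real.exp (-(k : ℝ) ^ 2 / n) = (Real.exp ((k : ℝ) ^ 2 / n))⁻¹ := by
    rw [← Real.exp_neg]; ring_nf
  rw [hx, div_le_iff₀ hcn] at key
  have h2 : Real.exp ((k : ℝ) ^ 2 / n) * ((n - k).choose k : ℝ) ≤ (n.choose k : ℝ) := by
    have := mul_le_mul_of_nonneg_left key hce.le
    rw [← mul_assoc, mul_inv_cancel₀ hce.ne', one_mul] at this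
    linarith
  rw [le_div_iff₀ hck]
  linarith
end

section
/- Let W be a hypergeometric random variable counting white socks when k socks are drawn without replacement from a drawer of k white and n-k black socks (so P(W = r) = C(k,r)·C(n-k,k-r)/C(n,k)). Then the total variation distance between the law of W and the Poisson distribution with mean k²/n is at most 3k/n. -/
open ProbabilityTheory
open scoped NNReal

/-- The hypergeometric point probability: `P(W = r) = C(k,r)·C(n-k,k-r)/C(n,k)`. -/
noncomputable def hypergeomPMFReal (n k : ℕ) (r : ℕ) : ℝ :=
  (k.choose r * (n - k).choose (k - r) : ℝ) / (n.choose k : ℝ)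

/-
Stein's method. Let `f` solve the Poisson Stein equation `λ f (m + 1) - m f m = 1_A m - Poi(λ)(A)`
with `λ = k²/n`. The hypergeometric weights satisfy `(s + 1) P(W = s + 1) = P(W = s) ρ(s)` with
`ρ(s) = (k - s)² / (n - 2k + s + 1)`, so `P(W ∈ A) - Poi(λ)(A) = E[λ f(W + 1) - W f(W)]` equals
`∑ₛ P(W = s) (λ - ρ(s)) f(s + 1)`. Since `ρ` decreases and `E ρ(W) = E W = λ`, the coefficients
change sign once and sum to zero. Summation by parts and the classical bound `|Δf| ≤ 1/λ` (a
consequence of the log-concavity of the Poisson weights) then bound the sum by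
`(λ E W - E W(W - 1)) / λ = k²/n - (k - 1)²/(n - 1) ≤ 3k/n`.
-/

set_option linter.deprecated false

open Finset

lemma Set.indicator_one_mul_apply {α : Type*} (A : Set α) (f : α → ℝ) (a : α) :
    A.indicator 1 a * f a = A.indicator f a := by
  by_cases ha : a ∈ A <;> simp [ha]

lemma sum_range_mul_nonpos_of_monotoneOn {N : ℕ} {p c : ℕ → ℝ} (hp : ∀ s, 0 ≤ p s)
    (hc : MonotoneOn c (Set.Iio N)) (hsum : ∑ s ∈ range N, p s * c s = 0) {m : ℕ} (hm : m ≤ N) :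
    ∑ s ∈ range m, p s * c s ≤ 0 := by
  rcases hm.eq_or_lt with rfl | hmN
  · exact hsum.le
  rcases le_or_gt (c m) 0 with hcm | hcm
  · refine sum_nonpos fun s hs ↦ mul_nonpos_of_nonneg_of_nonpos (hp s) ?_
    have hsm := mem_range.1 hs
    exact (hc (hsm.trans hmN) hmN hsm.le).trans hcm
  · have htail : 0 ≤ ∑ s ∈ Ico m N, p s * c s := by
      refine sum_nonneg fun s hs ↦ mul_nonneg (hp s) ?_
      have hs' := mem_Ico.1 hs
      exact hcm.le.trans (hc hmN hs'.2 hs'.1)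
    linarith [sum_range_add_sum_Ico (fun s ↦ p s * c s) hm]

lemma abs_sum_mul_le_of_sum_range_nonpos {N : ℕ} {a f : ℕ → ℝ} {B : ℝ}
    (hsum : ∑ s ∈ range N, a s = 0) (hpart : ∀ m ≤ N, ∑ s ∈ range m, a s ≤ 0)
    (hf : ∀ i, |f (i + 1) - f i| ≤ B) :
    |∑ s ∈ range N, a s * f s| ≤ B * ∑ s ∈ range N, s * a s := by
  have hparts (g : ℕ → ℝ) : ∑ s ∈ range N, g s * a s
      = -∑ i ∈ range (N - 1), (g (i + 1) - g i) * ∑ s ∈ range (i + 1), a s := by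
    simpa [hsum] using sum_range_by_parts g a N
  have hpart' (i : ℕ) (hi : i ∈ range (N - 1)) : ∑ s ∈ range (i + 1), a s ≤ 0 :=
    hpart _ (by have := mem_range.1 hi; omega)
  have hid : ∑ s ∈ range N, (s : ℝ) * a s
      = ∑ i ∈ range (N - 1), -∑ s ∈ range (i + 1), a s := by
    simp [hparts, sum_neg_distrib]
  rw [hid, mul_sum]
  simp only [mul_comm (a _) (f _), hparts, abs_neg]
  refine (abs_sum_le_sum_abs _ _).trans (sum_le_sum fun i hi ↦ ?_)
  rw [abs_mul, abs_of_nonpos (hpart' i hi)]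
  exact mul_le_mul_of_nonneg_right (hf i) (neg_nonneg.2 (hpart' i hi))

namespace ProbabilityTheory

section Poisson

variable {r : ℝ≥0}

lemma poissonPMFReal_succ (r : ℝ≥0) (m : ℕ) :
    poissonPMFReal r (m + 1) = poissonPMFReal r m * r / (m + 1) := by
  simp only [poissonPMFReal, pow_succ, Nat.factorial_succ]
  push_cast
  field_simp

lemma hasSum_poissonPMFReal (r : ℝ≥0) : HasSum (poissonPMFReal r) 1 :=
  hasSum_one_poissonMeasure r

lemma summable_poissonPMFReal (r : ℝ≥0) : Summable (poissonPMFReal r) :=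
  (hasSum_poissonPMFReal r).summable

/-- Log-concavity of the Poisson weights. -/
lemma poissonPMFReal_mul_succ_le (r : ℝ≥0) {s t : ℕ} (hst : s ≤ t) :
    poissonPMFReal r s * poissonPMFReal r (t + 1)
      ≤ poissonPMFReal r (s + 1) * poissonPMFReal r t := by
  have hp := poissonPMFReal_nonneg (r := r) (n := s)
  have hq := poissonPMFReal_nonneg (r := r) (n := t)
  have hst' : (s : ℝ) + 1 ≤ t + 1 := by gcongr
  calc poissonPMFReal r s * poissonPMFReal r (t + 1)
      = poissonPMFReal r s * poissonPMFReal r t * (r / (t + 1)) := by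
        rw [poissonPMFReal_succ]; ring
    _ ≤ poissonPMFReal r s * poissonPMFReal r t * (r / (s + 1)) := by gcongr
    _ = poissonPMFReal r (s + 1) * poissonPMFReal r t := by
        rw [poissonPMFReal_succ]; ring

lemma poissonPMFReal_mul_one_sub_sum_le (r : ℝ≥0) (m : ℕ) :
    poissonPMFReal r m * (1 - ∑ i ∈ range (m + 2), poissonPMFReal r i)
      ≤ poissonPMFReal r (m + 1) * (1 - ∑ i ∈ range (m + 1), poissonPMFReal r i) := by
  have hs (j : ℕ) : Summable fun i ↦ poissonPMFReal r (i + j) :=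
    (summable_nat_add_iff j).2 (summable_poissonPMFReal r)
  have htail (j : ℕ) : 1 - ∑ i ∈ range j, poissonPMFReal r i = ∑' i, poissonPMFReal r (i + j) := by
    rw [← (hasSum_poissonPMFReal r).tsum_eq, ← (summable_poissonPMFReal r).sum_add_tsum_nat_add j]
    ring
  rw [htail, htail, ← (hs _).tsum_mul_left, ← (hs _).tsum_mul_left]
  refine Summable.tsum_le_tsum (fun i ↦ ?_) ((hs _).mul_left _) ((hs _).mul_left _)
  exact poissonPMFReal_mul_succ_le r (by omega : m ≤ i + (m + 1))

lemma poissonPMFReal_mul_sum_le (r : ℝ≥0) (m : ℕ) :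
    poissonPMFReal r (m + 1) * ∑ i ∈ range (m + 1), poissonPMFReal r i
      ≤ poissonPMFReal r m * ∑ i ∈ range (m + 2), poissonPMFReal r i := by
  calc poissonPMFReal r (m + 1) * ∑ i ∈ range (m + 1), poissonPMFReal r i
      ≤ poissonPMFReal r m * ∑ i ∈ range (m + 1), poissonPMFReal r (i + 1) := by
        rw [mul_sum, mul_sum]
        refine sum_le_sum fun i hi ↦ ?_
        rw [mul_comm, mul_comm (poissonPMFReal r m)]
        exact poissonPMFReal_mul_succ_le r (Nat.lt_succ_iff.1 (mem_range.1 hi))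
    _ ≤ poissonPMFReal r m * ∑ i ∈ range (m + 2), poissonPMFReal r i := by
        rw [sum_range_succ' _ (m + 1)]
        exact mul_le_mul_of_nonneg_left (le_add_of_nonneg_right poissonPMFReal_nonneg)
          poissonPMFReal_nonneg

noncomputable def poissonProb (r : ℝ≥0) (A : Set ℕ) : ℝ :=
  ∑' i, A.indicator (poissonPMFReal r) i

lemma poissonProb_add_compl (r : ℝ≥0) (A : Set ℕ) : poissonProb r A + poissonProb r Aᶜ = 1 := by
  rw [poissonProb, poissonProb, ← Summable.tsum_add
    ((summable_poissonPMFReal r).indicator A) ((summable_poissonPMFReal r).indicator Aᶜ)]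
  have hsplit (i : ℕ) := congrFun (Set.indicator_self_add_compl A (poissonPMFReal r)) i
  simp only [Pi.add_apply] at hsplit
  simp only [hsplit]
  exact (hasSum_poissonPMFReal r).tsum_eq

lemma sum_indicator_le_poissonProb (r : ℝ≥0) (A : Set ℕ) (m : ℕ) :
    ∑ i ∈ range m, A.indicator (poissonPMFReal r) i ≤ poissonProb r A :=
  ((summable_poissonPMFReal r).indicator A).sum_le_tsum _
    fun i _ ↦ Set.indicator_nonneg (fun _ _ ↦ poissonPMFReal_nonneg) i

noncomputable def poissonSteinSolution (r : ℝ≥0) (A : Set ℕ) : ℕ → ℝ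
  | 0 => 0
  | m + 1 => (m * poissonSteinSolution r A m + A.indicator 1 m - poissonProb r A) / r

lemma poissonSteinSolution_spec (hr : r ≠ 0) (A : Set ℕ) (m : ℕ) :
    r * poissonSteinSolution r A (m + 1) - m * poissonSteinSolution r A m
      = A.indicator 1 m - poissonProb r A := by
  rw [poissonSteinSolution, mul_div_cancel₀ _ (NNReal.coe_ne_zero.2 hr)]
  ring

lemma poissonSteinSolution_compl (r : ℝ≥0) (A : Set ℕ) (m : ℕ) :
    poissonSteinSolution r Aᶜ m = - poissonSteinSolution r A m := by
  induction m with
  | zero => simp [poissonSteinSolution]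
  | succ m ih =>
    have h1 : A.indicator (1 : ℕ → ℝ) m + Aᶜ.indicator 1 m = 1 :=
      congrFun (Set.indicator_self_add_compl A 1) m
    have h2 := poissonProb_add_compl r A
    rw [poissonSteinSolution, poissonSteinSolution, ih, ← neg_div]
    congr 1
    linarith

lemma mul_poissonPMFReal_mul_poissonSteinSolution (hr : r ≠ 0) (A : Set ℕ) (m : ℕ) :
    r * poissonPMFReal r m * poissonSteinSolution r A (m + 1)
      = ∑ i ∈ range (m + 1), A.indicator (poissonPMFReal r) i
        - poissonProb r A * ∑ i ∈ range (m + 1), poissonPMFReal r i := by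
  have hr' : (r : ℝ) ≠ 0 := NNReal.coe_ne_zero.2 hr
  induction m with
  | zero =>
    rw [poissonSteinSolution, poissonSteinSolution, sum_range_one, sum_range_one,
      ← Set.indicator_one_mul_apply A (poissonPMFReal r) 0]
    field_simp
    ring
  | succ m ih =>
    have hstep : r * poissonPMFReal r (m + 1) * poissonSteinSolution r A (m + 2)
        = r * poissonPMFReal r m * poissonSteinSolution r A (m + 1)
          + (A.indicator 1 (m + 1) - poissonProb r A) * poissonPMFReal r (m + 1) := by
      rw [poissonSteinSolution, poissonPMFReal_succ]
      field_simp
      push_cast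
      ring
    rw [hstep, ih, sum_range_succ _ (m + 1), sum_range_succ _ (m + 1),
      ← Set.indicator_one_mul_apply A (poissonPMFReal r) (m + 1)]
    ring

theorem poissonSteinSolution_sub_le (hr : r ≠ 0) (A : Set ℕ) (m : ℕ) :
    poissonSteinSolution r A (m + 2) - poissonSteinSolution r A (m + 1) ≤ 1 / r := by
  have hf₁ := mul_poissonPMFReal_mul_poissonSteinSolution hr A m
  have hf₂ := mul_poissonPMFReal_mul_poissonSteinSolution hr A (m + 1)
  have hL₁ := poissonPMFReal_mul_one_sub_sum_le r m
  have hL₂ := poissonPMFReal_mul_sum_le r m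
  have hπ := sum_indicator_le_poissonProb r A (m + 2)
  have htotal : ∑ i ∈ range (m + 2), poissonPMFReal r i ≤ 1 :=
    (hasSum_poissonPMFReal r).tsum_eq ▸
      (summable_poissonPMFReal r).sum_le_tsum _ fun _ _ ↦ poissonPMFReal_nonneg
  simp only [sum_range_succ _ (m + 1)] at hf₂ hL₁ hL₂ hπ htotal
  set p := poissonPMFReal r
  set F := ∑ i ∈ range (m + 1), p i
  set P := ∑ i ∈ range (m + 1), A.indicator p i
  set a := A.indicator p (m + 1)
  set π := poissonProb r A
  have hp₀ : 0 < p m := poissonPMFReal_pos (pos_iff_ne_zero.2 hr)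
  have hp₁ : 0 < p (m + 1) := poissonPMFReal_pos (pos_iff_ne_zero.2 hr)
  have hF : 0 ≤ F := sum_nonneg fun _ _ ↦ poissonPMFReal_nonneg
  have hP : 0 ≤ P := sum_nonneg fun i _ ↦ Set.indicator_nonneg (fun _ _ ↦ poissonPMFReal_nonneg) i
  have ha₀ : 0 ≤ a := Set.indicator_nonneg (fun _ _ ↦ poissonPMFReal_nonneg) _
  have ha₁ : a ≤ p (m + 1) := Set.indicator_le_self' (fun _ _ ↦ poissonPMFReal_nonneg) _
  set D := p m * (F + p (m + 1)) - p (m + 1) * F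
  have hD : 0 ≤ D := by linarith
  have hcross : r * p m * p (m + 1)
      * (poissonSteinSolution r A (m + 2) - poissonSteinSolution r A (m + 1))
      = P * (p m - p (m + 1)) + a * p m - π * D := by
    linear_combination p m * hf₂ - p (m + 1) * hf₁
  -- `P` and the tail `π - P - a` enter with nonpositive coefficients: only the mass `a` at
  -- `m + 1` can raise the increment
  have h₁ : 0 ≤ (π - P - a) * D := mul_nonneg (by linarith) hD
  have h₂ : 0 ≤ P * (p (m + 1) * (1 - F) - p m * (1 - (F + p (m + 1)))) :=
    mul_nonneg hP (by linarith)
  have h₃ : 0 ≤ (p (m + 1) - a) * (p m - D) := by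
    have : 0 ≤ p m * (1 - (F + p (m + 1))) := mul_nonneg hp₀.le (by linarith)
    exact mul_nonneg (by linarith) (by nlinarith)
  have h₄ : 0 ≤ p (m + 1) * D := mul_nonneg hp₁.le hD
  rw [le_div_iff₀ (by positivity), ← mul_le_mul_iff_right₀ (mul_pos hp₀ hp₁)]
  linear_combination hcross + h₁ + h₂ + h₃ + h₄

theorem abs_poissonSteinSolution_sub_le (hr : r ≠ 0) (A : Set ℕ) (m : ℕ) :
    |poissonSteinSolution r A (m + 2) - poissonSteinSolution r A (m + 1)| ≤ 1 / r := by
  have h := poissonSteinSolution_sub_le hr Aᶜ m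
  rw [poissonSteinSolution_compl, poissonSteinSolution_compl] at h
  exact abs_le.2 ⟨by linarith, poissonSteinSolution_sub_le hr A m⟩

end Poisson

end ProbabilityTheory

lemma Nat.sum_choose_mul_choose_mul_choose (a b : ℕ) {c j : ℕ} (hjc : j ≤ c) :
    ∑ i ∈ range (c + 1), i.choose j * (a.choose i * b.choose (c - i))
      = a.choose j * (a - j + b).choose (c - j) := by
  have hterm (t : ℕ) : (j + t).choose j * (a.choose (j + t) * b.choose (c - (j + t)))
      = a.choose j * ((a - j).choose t * b.choose (c - j - t)) := by
    rw [← mul_assoc, mul_comm ((j + t).choose j), Nat.choose_mul (Nat.le_add_right j t),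
      Nat.add_sub_cancel_left, Nat.sub_add_eq, mul_assoc]
  rw [show c + 1 = j + (c - j + 1) by omega, sum_range_add,
    sum_eq_zero fun i hi ↦ by rw [Nat.choose_eq_zero_of_lt (mem_range.1 hi), zero_mul],
    zero_add]
  simp only [hterm, ← mul_sum]
  rw [Nat.add_choose_eq, Nat.sum_antidiagonal_eq_sum_range_succ_mk]

section Hypergeometric

variable {n k : ℕ}

lemma hypergeomPMFReal_nonneg (n k s : ℕ) : 0 ≤ hypergeomPMFReal n k s := by
  unfold hypergeomPMFReal
  positivity

lemma hypergeomPMFReal_eq_zero {s : ℕ} (hs : k < s) : hypergeomPMFReal n k s = 0 := by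
  simp [hypergeomPMFReal, Nat.choose_eq_zero_of_lt hs]

lemma sum_choose_mul_hypergeomPMFReal (hkn : k ≤ n) {j : ℕ} (hjn : j ≤ n) :
    ∑ s ∈ range (k + 1), (s.choose j : ℝ) * hypergeomPMFReal n k s
      = (k.choose j : ℝ) ^ 2 / n.choose j := by
  rcases le_or_gt j k with hjk | hkj
  · have hsum := Nat.sum_choose_mul_choose_mul_choose k (n - k) hjk
    rw [show k - j + (n - k) = n - j by omega] at hsum
    have hmul := Nat.choose_mul (n := n) hjk
    have hnk : (n.choose k : ℝ) ≠ 0 := by exact_mod_cast (Nat.choose_pos hkn).ne'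
    have hnj : (n.choose j : ℝ) ≠ 0 := by exact_mod_cast (Nat.choose_pos hjn).ne'
    simp only [hypergeomPMFReal, mul_div_assoc', ← sum_div]
    rw [div_eq_div_iff hnk hnj]
    have hsumR := congrArg (Nat.cast (R := ℝ)) hsum
    have hmulR := congrArg (Nat.cast (R := ℝ)) hmul
    push_cast at hsumR hmulR
    simp only [← mul_assoc] at hsumR ⊢
    rw [hsumR]
    linear_combination -(k.choose j : ℝ) * hmulR
  · rw [Nat.choose_eq_zero_of_lt hkj, sum_eq_zero fun s hs ↦ by
      rw [Nat.choose_eq_zero_of_lt (by have := mem_range.1 hs; omega), Nat.cast_zero, zero_mul]]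
    simp

lemma sum_hypergeomPMFReal (hkn : k ≤ n) : ∑ s ∈ range (k + 1), hypergeomPMFReal n k s = 1 := by
  simpa using sum_choose_mul_hypergeomPMFReal hkn (Nat.zero_le n)

lemma sum_mul_hypergeomPMFReal (hk : 0 < k) (hkn : k ≤ n) :
    ∑ s ∈ range (k + 1), (s : ℝ) * hypergeomPMFReal n k s = (k : ℝ) ^ 2 / n := by
  simpa using sum_choose_mul_hypergeomPMFReal hkn (by omega : 1 ≤ n)

lemma sum_mul_sub_one_mul_hypergeomPMFReal (hkn : k ≤ n) (hn : 2 ≤ n) :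
    ∑ s ∈ range (k + 1), (s : ℝ) * (s - 1) * hypergeomPMFReal n k s
      = (k : ℝ) ^ 2 * (k - 1) ^ 2 / (n * (n - 1)) := by
  have h := sum_choose_mul_hypergeomPMFReal hkn hn
  simp only [Nat.cast_choose_two] at h
  have hn₁ : (n : ℝ) - 1 ≠ 0 := by
    have : (2 : ℝ) ≤ n := by exact_mod_cast hn
    linarith
  have hn₀ : (n : ℝ) ≠ 0 := by positivity
  calc ∑ s ∈ range (k + 1), (s : ℝ) * (s - 1) * hypergeomPMFReal n k s
      = 2 * ∑ s ∈ range (k + 1), (s : ℝ) * (s - 1) / 2 * hypergeomPMFReal n k s := by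
        rw [mul_sum]; congr! 1; ring
    _ = (k : ℝ) ^ 2 * (k - 1) ^ 2 / (n * (n - 1)) := by
        rw [h]; field_simp

/-- The ratio `(s + 1) P(W = s + 1) / P(W = s)` of consecutive hypergeometric weights. -/
noncomputable def hypergeomRatio (n k s : ℕ) : ℝ := ((k : ℝ) - s) ^ 2 / ((n : ℝ) - 2 * k + s + 1)

lemma hypergeomRatio_denom_pos (h : 2 * k ≤ n) (s : ℕ) : 0 < (n : ℝ) - 2 * k + s + 1 := by
  have : (2 * k : ℝ) ≤ n := by exact_mod_cast h
  positivity

lemma succ_mul_hypergeomPMFReal_succ (h : 2 * k ≤ n) (s : ℕ) :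
    (s + 1) * hypergeomPMFReal n k (s + 1) = hypergeomPMFReal n k s * hypergeomRatio n k s := by
  rcases lt_trichotomy s k with hsk | rfl | hks
  · have e₁ := Nat.choose_succ_right_eq k s
    have e₂ := Nat.choose_succ_right_eq (n - k) (k - (s + 1))
    rw [show k - (s + 1) + 1 = k - s by omega] at e₂
    have e₁R := congrArg (Nat.cast (R := ℝ)) e₁
    have e₂R := congrArg (Nat.cast (R := ℝ)) e₂
    push_cast [Nat.cast_sub hsk.le, Nat.cast_sub (by omega : k - (s + 1) ≤ n - k),
      Nat.cast_sub (by omega : k ≤ n), Nat.cast_sub (by omega : s + 1 ≤ k)] at e₁R e₂R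
    have hd := (hypergeomRatio_denom_pos h s).ne'
    have hnk : (n.choose k : ℝ) ≠ 0 := by exact_mod_cast (Nat.choose_pos (by omega : k ≤ n)).ne'
    simp only [hypergeomPMFReal, hypergeomRatio]
    rw [mul_div_assoc', div_mul_div_comm, div_eq_div_iff hnk (mul_ne_zero hnk hd)]
    linear_combination (n.choose k : ℝ) * (((n - k).choose (k - (s + 1)) : ℝ)
      * ((n : ℝ) - 2 * k + s + 1) * e₁R - (k.choose s : ℝ) * ((k : ℝ) - s) * e₂R)
  · simp [hypergeomPMFReal_eq_zero (Nat.lt_succ_self s), hypergeomRatio]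
  · simp [hypergeomPMFReal_eq_zero hks, hypergeomPMFReal_eq_zero (hks.trans (Nat.lt_succ_self s))]

lemma sum_mul_hypergeomPMFReal_mul (h : 2 * k ≤ n) (g : ℕ → ℝ) :
    ∑ s ∈ range (k + 1), s * hypergeomPMFReal n k s * g s
      = ∑ s ∈ range (k + 1), hypergeomPMFReal n k s * hypergeomRatio n k s * g (s + 1) := by
  have hlast : hypergeomRatio n k k = 0 := by simp [hypergeomRatio]
  rw [sum_range_succ', sum_range_succ]
  simp only [hlast, Nat.cast_zero, zero_mul, mul_zero, add_zero]
  refine sum_congr rfl fun s _ ↦ ?_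
  rw [Nat.cast_succ, succ_mul_hypergeomPMFReal_succ h]

lemma hypergeomRatio_antitoneOn (h : 2 * k ≤ n) : AntitoneOn (hypergeomRatio n k) (Set.Iic k) := by
  intro s hs t ht hst
  have htk : (t : ℝ) ≤ k := by exact_mod_cast ht
  unfold hypergeomRatio
  gcongr
  · exact hypergeomRatio_denom_pos h s

end Hypergeometric

section HypergeometricPoisson

variable {n k : ℕ} {r : ℝ≥0}

theorem tsum_indicator_hypergeomPMFReal_sub_poissonProb (h : 2 * k ≤ n) (hr : r ≠ 0)
    (A : Set ℕ) :
    ∑' s, A.indicator (hypergeomPMFReal n k) s - poissonProb r A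
      = ∑ s ∈ range (k + 1), hypergeomPMFReal n k s * (r - hypergeomRatio n k s)
          * poissonSteinSolution r A (s + 1) := by
  have hfin : ∑' s, A.indicator (hypergeomPMFReal n k) s
      = ∑ s ∈ range (k + 1), hypergeomPMFReal n k s * A.indicator 1 s := by
    rw [tsum_eq_sum fun s hs ↦ Set.indicator_apply_eq_zero.2 fun _ ↦
      hypergeomPMFReal_eq_zero (by simpa using (hs : s ∉ range (k + 1)))]
    exact sum_congr rfl fun s _ ↦ by rw [mul_comm, Set.indicator_one_mul_apply]
  calc ∑' s, A.indicator (hypergeomPMFReal n k) s - poissonProb r A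
      = ∑ s ∈ range (k + 1), hypergeomPMFReal n k s * (A.indicator 1 s - poissonProb r A) := by
        simp only [hfin, mul_sub, sum_sub_distrib, ← sum_mul,
          sum_hypergeomPMFReal (by omega : k ≤ n), one_mul]
    _ = ∑ s ∈ range (k + 1), hypergeomPMFReal n k s
          * (r * poissonSteinSolution r A (s + 1) - s * poissonSteinSolution r A s) := by
        simp only [poissonSteinSolution_spec hr]
    _ = r * ∑ s ∈ range (k + 1), hypergeomPMFReal n k s * poissonSteinSolution r A (s + 1)
          - ∑ s ∈ range (k + 1), s * hypergeomPMFReal n k s * poissonSteinSolution r A s := by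
        rw [mul_sum, ← sum_sub_distrib]
        exact sum_congr rfl fun s _ ↦ by ring
    _ = _ := by
        rw [sum_mul_hypergeomPMFReal_mul h, mul_sum, ← sum_sub_distrib]
        exact sum_congr rfl fun s _ ↦ by ring

variable (n k) in
/-- The coefficients of `f (s + 1)` in the Stein identity, for the Poisson mean `k² / n`. -/
noncomputable def hypergeomSteinCoeff (s : ℕ) : ℝ :=
  hypergeomPMFReal n k s * ((k : ℝ) ^ 2 / n - hypergeomRatio n k s)

lemma sum_hypergeomSteinCoeff (hk : 0 < k) (h : 2 * k ≤ n) :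
    ∑ s ∈ range (k + 1), hypergeomSteinCoeff n k s = 0 := by
  have hbias := sum_mul_hypergeomPMFReal_mul h fun _ ↦ 1
  simp only [mul_one] at hbias
  simp only [hypergeomSteinCoeff, mul_sub, sum_sub_distrib, ← hbias, ← sum_mul,
    sum_hypergeomPMFReal (by omega : k ≤ n), sum_mul_hypergeomPMFReal hk (by omega : k ≤ n)]
  ring

lemma sum_range_hypergeomSteinCoeff_nonpos (hk : 0 < k) (h : 2 * k ≤ n) {m : ℕ}
    (hm : m ≤ k + 1) : ∑ s ∈ range m, hypergeomSteinCoeff n k s ≤ 0 := by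
  refine sum_range_mul_nonpos_of_monotoneOn (hypergeomPMFReal_nonneg n k)
    (fun s hs t ht hst ↦ ?_) (sum_hypergeomSteinCoeff hk h) hm
  exact sub_le_sub_left (hypergeomRatio_antitoneOn h (Nat.lt_succ_iff.1 hs)
    (Nat.lt_succ_iff.1 ht) hst) _

lemma sum_mul_hypergeomSteinCoeff (hk : 0 < k) (h : 2 * k ≤ n) :
    ∑ s ∈ range (k + 1), s * hypergeomSteinCoeff n k s
      = ((k : ℝ) ^ 2 / n) ^ 2 - (k : ℝ) ^ 2 * (k - 1) ^ 2 / (n * (n - 1)) := by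
  have hbias := sum_mul_hypergeomPMFReal_mul h fun s ↦ (s : ℝ) - 1
  simp only [Nat.cast_succ, add_sub_cancel_right] at hbias
  have hρ : ∑ s ∈ range (k + 1), hypergeomPMFReal n k s * hypergeomRatio n k s * s
      = ∑ s ∈ range (k + 1), (s : ℝ) * (s - 1) * hypergeomPMFReal n k s := by
    rw [← hbias]
    exact sum_congr rfl fun s _ ↦ by ring
  calc ∑ s ∈ range (k + 1), s * hypergeomSteinCoeff n k s
      = (k : ℝ) ^ 2 / n * ∑ s ∈ range (k + 1), s * hypergeomPMFReal n k s
        - ∑ s ∈ range (k + 1), hypergeomPMFReal n k s * hypergeomRatio n k s * s := by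
        rw [mul_sum, ← sum_sub_distrib]
        exact sum_congr rfl fun s _ ↦ by rw [hypergeomSteinCoeff]; ring
    _ = _ := by
        rw [hρ, sum_mul_hypergeomPMFReal hk (by omega),
          sum_mul_sub_one_mul_hypergeomPMFReal (by omega) (by omega)]
        ring

end HypergeometricPoisson

theorem hypergeom_poisson_tv_general (n k : ℕ) (hk : 0 < k) (h : 2 * k ≤ n)
    (A : Set ℕ) :
    |(∑' r : ℕ, A.indicator (hypergeomPMFReal n k) r)
      - (∑' r : ℕ, A.indicator (poissonPMFReal ((k : ℝ≥0) ^ 2 / (n : ℝ≥0))) r)|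
      ≤ 3 * k / n := by
  set r : ℝ≥0 := (k : ℝ≥0) ^ 2 / (n : ℝ≥0)
  have hr : (r : ℝ) = k ^ 2 / n := by simp [r]
  have hr₀ : r ≠ 0 :=
    div_ne_zero (pow_ne_zero _ (by exact_mod_cast hk.ne')) (by exact_mod_cast (by omega : n ≠ 0))
  change |_ - poissonProb r A| ≤ _
  rw [tsum_indicator_hypergeomPMFReal_sub_poissonProb h hr₀ A, hr]
  have hn : (2 : ℝ) ≤ n := by exact_mod_cast (by omega : 2 ≤ n)
  have hk₁ : (1 : ℝ) ≤ k := by exact_mod_cast hk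
  calc |∑ s ∈ range (k + 1), hypergeomSteinCoeff n k s * poissonSteinSolution r A (s + 1)|
      ≤ 1 / r * ∑ s ∈ range (k + 1), s * hypergeomSteinCoeff n k s :=
        abs_sum_mul_le_of_sum_range_nonpos (sum_hypergeomSteinCoeff hk h)
          (fun _ ↦ sum_range_hypergeomSteinCoeff_nonpos hk h)
          (abs_poissonSteinSolution_sub_le hr₀ A)
    _ = k ^ 2 / n - (k - 1) ^ 2 / (n - 1) := by
        rw [sum_mul_hypergeomSteinCoeff hk h, hr]
        field_simp
    _ ≤ k ^ 2 / n - (k - 1) ^ 2 / n := by gcongr <;> linarith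
    _ ≤ 3 * k / n := by rw [← sub_div]; gcongr; nlinarith

/-- The total variation distance between the hypergeometric distribution (k draws from
k white and n-k black) and the Poisson distribution with mean `k²/n` is at most `3k/n`:
for every set `A ⊆ ℕ` the probabilities differ by at most `3k/n`. -/
theorem hypergeom_poisson_tv (n k : ℕ) (hn : 0 < n) (hk : 0 < k) (h : 2 * k ≤ n)
    (A : Set ℕ) :
    |(∑' r : ℕ, A.indicator (hypergeomPMFReal n k) r)
      - (∑' r : ℕ, A.indicator (poissonPMFReal ((k : ℝ≥0) ^ 2 / (n : ℝ≥0))) r)|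
      ≤ 3 * k / n :=
  hypergeom_poisson_tv_general n k hk h A
end

section
/- Let n, k → ∞ with k² ≫ n and k = o(n), and let r = k²/n (assumed integer). Then C(k,r)·C(n-k,k-r)/C(n,k) → 0. -/
open Filter

open Finset
lemma choose_step (N K j : ℕ) (hj : j + 1 ≤ K) (hKN : 2 * K ≤ N) :
    K.choose (j+1) * (N - K).choose (K - (j+1)) * ((j+1) * (N - 2*K + j + 1))
      = K.choose j * (N - K).choose (K - j) * (K - j)^2 := by
  have h1 : K.choose (j+1) * (j+1) = K.choose j * (K - j) := Nat.choose_succ_right_eq K j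
  have h2 : (N-K).choose (K - (j+1) + 1) * (K - (j+1) + 1)
      = (N-K).choose (K - (j+1)) * ((N-K) - (K - (j+1))) := Nat.choose_succ_right_eq _ _
  have e1 : K - (j+1) + 1 = K - j := by omega
  have e2 : (N-K) - (K-(j+1)) = N - 2*K + j + 1 := by omega
  rw [e1, e2] at h2
  calc K.choose (j+1) * (N - K).choose (K - (j+1)) * ((j+1) * (N - 2*K + j + 1))
      = (K.choose (j+1) * (j+1)) * ((N-K).choose (K-(j+1)) * (N - 2*K + j + 1)) := by ring
    _ = (K.choose j * (K - j)) * ((N-K).choose (K-j) * (K-j)) := by rw [h1, ← h2]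
    _ = K.choose j * (N - K).choose (K - j) * (K - j)^2 := by ring

lemma vandermonde (N K : ℕ) (h : K ≤ N) :
    ∑ j ∈ range (K+1), K.choose j * (N-K).choose (K-j) = N.choose K := by
  have hh : K + (N - K) = N := by omega
  conv_rhs => rw [← hh]
  rw [Nat.add_choose_eq, Finset.Nat.sum_antidiagonal_eq_sum_range_succ_mk]

lemma step_real (a s T N M x : ℝ) (ha : 0 ≤ a) (hs : 0 ≤ s) (hsT : s + 1 ≤ T)
    (hM0 : 0 ≤ M) (hMN : M ≤ N) (hx : 0 ≤ x) (hsx : s*x ≤ 1/2)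
    (hxa : x*a^2 = 2*T*a + (T+1)*N) :
    (1 - (s+1)*x) * (a^2 + (s+1)*M) ≤ (1 - s*x) * (a - s)^2 := by
  nlinarith [mul_nonneg (mul_nonneg hs hx) (mul_nonneg (by linarith : (0:ℝ) ≤ s+1) hM0),
    mul_nonneg hx (mul_nonneg (by linarith : (0:ℝ) ≤ s+1) hM0),
    mul_nonneg (by linarith : (0:ℝ) ≤ T - s) ha,
    mul_nonneg (by linarith : (0:ℝ) ≤ T - s) (by linarith : (0:ℝ) ≤ N),
    mul_nonneg (mul_nonneg hs hx) (mul_nonneg hs ha),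
    mul_nonneg (by linarith : (0:ℝ) ≤ 1 - s*x) (mul_nonneg hs hs),
    mul_nonneg (by linarith : (0:ℝ) ≤ s+1) (by linarith : (0:ℝ) ≤ N - M)]

set_option maxHeartbeats 2000000 in
lemma core (N K R T : ℕ) (hNR : N * R = K^2)
    (hT1 : 1 ≤ T) (hT2 : T^2 * 100 ≤ R) (hRK : 100 * R ≤ K) (hKN : 100 * K ≤ N) :
    (K.choose R * (N - K).choose (K - R) : ℝ) / ((N.choose K : ℝ)) ≤ 2 / (T + 1) := by
  have hTT : T ≤ T^2 := Nat.le_self_pow two_ne_zero T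
  have hTR : 100 * T ≤ R := by nlinarith
  have hR100 : 100 ≤ R := by nlinarith
  set a : ℕ := K - R with ha_def
  have haK : 2 * a ≥ K := by omega
  have hRTK : R + T + 1 ≤ K := by omega
  have hTa : T ≤ a := by omega
  have ha0 : 0 < a := by omega
  have haR : (a : ℝ) = (K : ℝ) - (R : ℝ) := by
    rw [ha_def]; push_cast [Nat.cast_sub (by omega : R ≤ K)]; ring
  have hNRr : (N : ℝ) * R = (K:ℝ)^2 := by exact_mod_cast congrArg (Nat.cast (R := ℝ)) hNR
  have har : (0:ℝ) < a := by exact_mod_cast ha0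
  set x : ℝ := 2*T/a + (T+1)*N/a^2 with hx_def
  have hx0 : 0 ≤ x := by positivity
  have hxa : x * (a:ℝ)^2 = 2*T*a + (T+1)*(N:ℝ) := by
    rw [hx_def]; field_simp
  have h2a : (K:ℝ) ≤ 2 * a := by exact_mod_cast haK
  have hT2r : (T:ℝ)^2 * 100 ≤ R := by exact_mod_cast hT2
  have hRKr : 100 * (R:ℝ) ≤ K := by exact_mod_cast hRK
  have hKNr : 100 * (K:ℝ) ≤ N := by exact_mod_cast hKN
  have hT1r : (1:ℝ) ≤ T := by exact_mod_cast hT1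
  have hTx : (T:ℝ) * x ≤ 1/2 := by
    have hcl : (T:ℝ) * (2*T*a + (T+1)*(N:ℝ)) ≤ (1/2) * (a:ℝ)^2 := by
      nlinarith [sq_nonneg ((T:ℝ) - 1), mul_pos har har, sq_nonneg ((K:ℝ) - 2*a),
        mul_le_mul_of_nonneg_right hT2r (le_of_lt har), sq_nonneg ((T:ℝ)*a)]
    have h2 : (T:ℝ)*x*(a:ℝ)^2 ≤ (1/2)*(a:ℝ)^2 := by rw [mul_assoc, hxa]; exact hcl
    exact le_of_mul_le_mul_right h2 (by positivity)
  -- the key lower bound by induction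
  have key : ∀ t, t ≤ T → ((K.choose R * (N - K).choose (K - R) : ℕ) : ℝ) * (1 - t*x)
      ≤ ((K.choose (R+t) * (N - K).choose (K - (R+t)) : ℕ) : ℝ) := by
    intro t ht
    induction t with
    | zero => simp
    | succ t ih =>
      have ht' : t ≤ T := by omega
      have ihh := ih ht'
      have htT : (t:ℝ) + 1 ≤ T := by exact_mod_cast Nat.succ_le_of_lt ht
      have ht0 : (0:ℝ) ≤ t := by positivity
      have htx : (t:ℝ)*x ≤ 1/2 := by
        refine le_trans ?_ hTx
        apply mul_le_mul_of_nonneg_right _ hx0; linarith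
      -- cast the nat recurrence
      have hc := choose_step N K (R+t) (by omega) (by omega)
      have hcr : ((K.choose (R+t+1) * (N - K).choose (K - (R+t+1)) : ℕ) : ℝ)
            * (((R:ℝ)+t+1) * ((N:ℝ) - 2*K + (R+t) + 1))
          = ((K.choose (R+t) * (N - K).choose (K - (R+t)) : ℕ) : ℝ) * ((K:ℝ) - (R+t))^2 := by
        have := congrArg (Nat.cast (R := ℝ)) hc
        push_cast [Nat.cast_sub (by omega : 2*K ≤ N), Nat.cast_sub (by omega : R+t ≤ K)] at this
        push_cast
        linarith [this]
      -- step inequality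
      have hM0 : (0:ℝ) ≤ (N:ℝ) - 2*K + 2*R + t + 1 := by nlinarith
      have hMN : (N:ℝ) - 2*K + 2*R + t + 1 ≤ N := by nlinarith
      have hstep := step_real (a:ℝ) t T N ((N:ℝ) - 2*K + 2*R + t + 1) x har.le ht0 htT hM0 hMN hx0 htx hxa
      have hden : ((R:ℝ)+t+1) * ((N:ℝ) - 2*K + (R+t) + 1)
          = (a:ℝ)^2 + ((t:ℝ)+1)*((N:ℝ) - 2*K + 2*R + t + 1) := by
        rw [haR]; linear_combination hNRr
      have hden0 : (0:ℝ) < ((R:ℝ)+t+1) * ((N:ℝ) - 2*K + (R+t) + 1) := by nlinarith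
      -- combine
      have hA0 : (0:ℝ) ≤ ((K.choose R * (N - K).choose (K - R) : ℕ) : ℝ) := by positivity
      have step2 : ((K.choose R * (N - K).choose (K - R) : ℕ) : ℝ) * (1 - ((t:ℝ)+1)*x)
            * (((R:ℝ)+t+1) * ((N:ℝ) - 2*K + (R+t) + 1))
          ≤ ((K.choose (R+t+1) * (N - K).choose (K - (R+t+1)) : ℕ) : ℝ)
            * (((R:ℝ)+t+1) * ((N:ℝ) - 2*K + (R+t) + 1)) := by
        rw [hcr]
        calc ((K.choose R * (N - K).choose (K - R) : ℕ) : ℝ) * (1 - ((t:ℝ)+1)*x)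
              * (((R:ℝ)+t+1) * ((N:ℝ) - 2*K + (R+t) + 1))
            = ((K.choose R * (N - K).choose (K - R) : ℕ) : ℝ) *
                ((1 - ((t:ℝ)+1)*x) * ((a:ℝ)^2 + ((t:ℝ)+1)*((N:ℝ) - 2*K + 2*R + t + 1))) := by
              rw [← hden]; ring
          _ ≤ ((K.choose R * (N - K).choose (K - R) : ℕ) : ℝ) * ((1 - (t:ℝ)*x) * ((a:ℝ) - t)^2) :=
              mul_le_mul_of_nonneg_left hstep hA0
          _ ≤ ((K.choose (R+t) * (N - K).choose (K - (R+t)) : ℕ) : ℝ) * ((K:ℝ) - (R+t))^2 := by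
              have e : ((a:ℝ) - t)^2 = ((K:ℝ) - (R+t))^2 := by rw [haR]; ring
              rw [e, ← mul_assoc]
              apply mul_le_mul_of_nonneg_right _ (sq_nonneg _)
              have : ((K.choose R * (N - K).choose (K - R) : ℕ) : ℝ) * (1 - (t:ℝ)*x)
                  ≤ ((K.choose (R+t) * (N - K).choose (K - (R+t)) : ℕ) : ℝ) := by
                exact_mod_cast ihh
              exact this
      have h3 := le_of_mul_le_mul_right step2 hden0
      simp only [show R + (t + 1) = R + t + 1 from rfl]
      push_cast at h3 ⊢
      linarith
  -- each term in the window is at least half the mode term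
  have hhalf : ∀ t ∈ range (T+1),
      ((K.choose R * (N - K).choose (K - R) : ℕ) : ℝ) / 2
        ≤ ((K.choose (R+t) * (N - K).choose (K - (R+t)) : ℕ) : ℝ) := by
    intro t htm
    have ht : t ≤ T := by simpa using Nat.lt_succ_iff.mp (Finset.mem_range.mp htm)
    have htx : (t:ℝ)*x ≤ 1/2 := by
      refine le_trans ?_ hTx
      apply mul_le_mul_of_nonneg_right _ hx0
      exact_mod_cast ht
    have hA0 : (0:ℝ) ≤ ((K.choose R * (N - K).choose (K - R) : ℕ) : ℝ) := by positivity
    calc ((K.choose R * (N - K).choose (K - R) : ℕ) : ℝ) / 2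
        ≤ ((K.choose R * (N - K).choose (K - R) : ℕ) : ℝ) * (1 - t*x) := by nlinarith
      _ ≤ _ := key t ht
  -- sum bound via Vandermonde
  have hsub : ∑ t ∈ range (T+1), K.choose (R+t) * (N - K).choose (K - (R+t))
      ≤ N.choose K := by
    have h1 : ∑ t ∈ range (T+1), K.choose (R+t) * (N - K).choose (K - (R+t))
        = ∑ j ∈ Ico R (R+(T+1)), K.choose j * (N - K).choose (K - j) := by
      rw [Finset.sum_Ico_eq_sum_range]
      simp
    rw [h1, ← vandermonde N K (by omega)]
    apply Finset.sum_le_sum_of_subset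
    intro j hj
    simp only [Finset.mem_Ico, Finset.mem_range] at hj ⊢
    omega
  have hsum : ((T:ℝ)+1) * (((K.choose R * (N - K).choose (K - R) : ℕ) : ℝ) / 2)
      ≤ (N.choose K : ℝ) := by
    have h2 := Finset.card_nsmul_le_sum (range (T+1))
      (fun t => ((K.choose (R+t) * (N - K).choose (K - (R+t)) : ℕ) : ℝ))
      (((K.choose R * (N - K).choose (K - R) : ℕ) : ℝ) / 2) hhalf
    rw [Finset.card_range, nsmul_eq_mul] at h2
    have h3 : ∑ t ∈ range (T+1), ((K.choose (R+t) * (N - K).choose (K - (R+t)) : ℕ) : ℝ)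
        ≤ (N.choose K : ℝ) := by
      rw [← Nat.cast_sum]
      exact_mod_cast hsub
    push_cast at h2 h3 ⊢
    linarith
  have hC0 : (0:ℝ) < (N.choose K : ℝ) := by
    exact_mod_cast Nat.choose_pos (by omega : K ≤ N)
  rw [div_le_div_iff₀ hC0 (by positivity)]
  push_cast at hsum ⊢
  nlinarith [hsum]


/-- If `n, k → ∞` with `k² ≫ n` and `k = o(n)`, and `r = k²/n` (an integer), then the
hypergeometric probability `C(k,r)·C(n-k,k-r)/C(n,k)` tends to `0`. -/
theorem hypergeom_mode_tendsto_zero (n k : ℕ → ℕ)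
    (hn : Tendsto n atTop atTop) (hk : Tendsto k atTop atTop)
    (hdvd : ∀ i, n i ∣ (k i) ^ 2)
    (hk2n : Tendsto (fun i => (n i : ℝ) / (k i : ℝ) ^ 2) atTop (nhds 0))
    (hkn : Tendsto (fun i => (k i : ℝ) / (n i : ℝ)) atTop (nhds 0)) :
    Tendsto (fun i =>
        ((k i).choose ((k i) ^ 2 / n i) * (n i - k i).choose (k i - (k i) ^ 2 / n i) : ℝ)
          / ((n i).choose (k i) : ℝ)) atTop (nhds 0) := by
  set R : ℕ → ℕ := fun i => (k i)^2 / n i with hR_def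
  set T : ℕ → ℕ := fun i => Nat.sqrt (R i / 100) with hT_def
  -- R tends to infinity
  have hRtop : Tendsto R atTop atTop := by
    rw [tendsto_atTop_atTop]
    intro b
    have h1 : ∀ᶠ i in atTop, (n i : ℝ) / (k i : ℝ)^2 < 1/(b+1) :=
      hk2n.eventually_lt_const (by positivity)
    have h2 : ∀ᶠ i in atTop, 1 ≤ n i := hn.eventually_ge_atTop 1
    have h3 : ∀ᶠ i in atTop, 1 ≤ k i := hk.eventually_ge_atTop 1
    obtain ⟨i0, hi0⟩ := (h1.and (h2.and h3)).exists_forall_of_atTop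
    refine ⟨i0, fun i hi => ?_⟩
    obtain ⟨ha, hb, hc⟩ := hi0 i hi
    have hk0 : (0:ℝ) < (k i : ℝ)^2 := by
      have : (1:ℝ) ≤ k i := by exact_mod_cast hc
      positivity
    have hn0 : (0:ℝ) < (n i : ℝ) := by
      have : (1:ℝ) ≤ n i := by exact_mod_cast hb
      positivity
    have : ((b:ℝ)+1) * n i < (k i : ℝ)^2 := by
      rw [div_lt_div_iff₀ hk0 (by positivity : (0:ℝ) < (b:ℝ)+1)] at ha
      linarith
    have hnat : (b+1) * n i ≤ (k i)^2 := by exact_mod_cast this.le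
    have : b + 1 ≤ R i := by
      rw [hR_def]
      exact (Nat.le_div_iff_mul_le (by omega)).2 hnat
    omega
  -- T tends to infinity
  have hTtop : Tendsto T atTop atTop := by
    rw [tendsto_atTop_atTop]
    intro b
    obtain ⟨i0, hi0⟩ := (hRtop.eventually_ge_atTop (100 * (b*b))).exists_forall_of_atTop
    refine ⟨i0, fun i hi => ?_⟩
    have := hi0 i hi
    rw [hT_def]
    simp only
    rw [Nat.le_sqrt]
    rw [Nat.le_div_iff_mul_le (by omega)]
    omega
  -- eventual upper bound
  have hub : ∀ᶠ i in atTop,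
      ((k i).choose (R i) * (n i - k i).choose (k i - R i) : ℝ) / ((n i).choose (k i) : ℝ)
        ≤ 2 / ((T i : ℝ) + 1) := by
    have h1 : ∀ᶠ i in atTop, (k i : ℝ) / (n i : ℝ) < 1/10000 :=
      hkn.eventually_lt_const (by norm_num)
    have h2 : ∀ᶠ i in atTop, 1 ≤ n i := hn.eventually_ge_atTop 1
    have h3 : ∀ᶠ i in atTop, 1 ≤ k i := hk.eventually_ge_atTop 1
    have h4 : ∀ᶠ i in atTop, 100 ≤ R i := hRtop.eventually_ge_atTop 100
    filter_upwards [h1, h2, h3, h4] with i ha hb hc hd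
    have hn0 : (0:ℝ) < (n i : ℝ) := by
      have : (1:ℝ) ≤ n i := by exact_mod_cast hb
      positivity
    have hkn' : 10000 * k i ≤ n i := by
      have : (10000:ℝ) * k i < n i := by
        rw [div_lt_div_iff₀ hn0 (by norm_num : (0:ℝ) < 10000)] at ha
        linarith
      have : ((10000 * k i : ℕ) : ℝ) < ((n i : ℕ) : ℝ) := by push_cast; linarith
      exact le_of_lt (by exact_mod_cast this)
    have hNR : n i * R i = (k i)^2 := Nat.mul_div_cancel' (hdvd i)
    have hRK : 100 * R i ≤ k i := by
      have hc1 : 10000 * (k i) * R i ≤ (k i)^2 := by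
        calc 10000 * (k i) * R i ≤ n i * R i := by
              apply Nat.mul_le_mul_right; exact hkn'
          _ = (k i)^2 := hNR
      nlinarith [hc, hc1]
    have hKN : 100 * k i ≤ n i := by omega
    have hT1 : 1 ≤ T i := by
      rw [hT_def]; simp only
      rw [Nat.le_sqrt]
      rw [Nat.le_div_iff_mul_le (by omega)]
      omega
    have hT2 : (T i)^2 * 100 ≤ R i := by
      have hs : T i ^ 2 ≤ R i / 100 := Nat.sqrt_le' (R i / 100)
      have : R i / 100 * 100 ≤ R i := Nat.div_mul_le_self _ _
      nlinarith
    exact core (n i) (k i) (R i) (T i) hNR hT1 hT2 hRK hKN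
  -- squeeze
  have hlb : ∀ᶠ i in atTop, (0:ℝ) ≤
      ((k i).choose (R i) * (n i - k i).choose (k i - R i) : ℝ) / ((n i).choose (k i) : ℝ) := by
    filter_upwards with i
    positivity
  have hlim : Tendsto (fun i => 2 / ((T i : ℝ) + 1)) atTop (nhds 0) := by
    apply Tendsto.div_atTop (tendsto_const_nhds (x := (2:ℝ)))
    apply tendsto_atTop_add_const_right
    exact tendsto_natCast_atTop_iff.2 hTtop
  exact tendsto_of_tendsto_of_tendsto_of_le_of_le' tendsto_const_nhds hlim hlb hub
end
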